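/- arXiv:2211.03893 — 2 statements merged into one kernel-verified Lean document; each statement's English description precedes it below -/
import Mathlib

section
/- In the metric $w_N$ on the set $S = \{u_x : x \in V(\rho)\}$ induced by a complete binary tree $\rho$ of depth $d$ (with the geometric edge weights: level-$d$ edges weight 1, level-$i$ edges weight $2^{(d-1)-i}$), where $w_N(u_x, u_{x'}) = \mathrm{dist}_\rho(\tilde x, x) + \mathrm{dist}_\rho(\tilde x, x')$ for $\tilde x$ a leaf descendant of the deeper of $x, x'$, every optimal Steiner tree for the terminal set $T = \{u_x : x \text{ a leaf of } \rho\}$ has every edge incident to a terminal. -/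
/-! Suppose an optimal Steiner tree has an edge `ab` between two non-leaves, with `b` not deeper
than `a`, and let `ṽ` be a leaf below `a`. Then `w(a,b) = w(ṽ,a) + w(ṽ,b)` with both summands
positive. If `ṽ` is not connected to `ab` in the tree, all terminals avoid `ab` and the edge can
be dropped. Otherwise, after removing `ab`, the terminal `ṽ` lies in the component of one
endpoint, and joining it to the other endpoint gives a strictly cheaper Steiner tree. -/

def levelWeight (d i : ℕ) : ℕ := if i = d then 1 else 2 ^ (d - 1 - i)

def distUp (d i j : ℕ) : ℕ := ∑ s ∈ Finset.Icc (j + 1) i, levelWeight d s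

def lcaDepth : List Bool → List Bool → ℕ
  | a :: as, b :: bs => if a = b then lcaDepth as bs + 1 else 0
  | _, _ => 0

/-- The value of the metric `w_N` on two nodes `x, x'` of the complete binary tree of
depth `d` (encoded as boolean lists of length `≤ d`): `dist_ρ(x̃, x) + dist_ρ(x̃, x')`
for `x̃` a depth-`d` leaf descendant of the deeper of `x, x'`. -/
def wNnode (d : ℕ) (x x' : List Bool) : ℕ :=
  if x'.length ≤ x.length then
    distUp d d x.length + distUp d d (lcaDepth x x') + distUp d x'.length (lcaDepth x x')
  else
    distUp d d x'.length + distUp d d (lcaDepth x x') + distUp d x.length (lcaDepth x x')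

def wNmetric {V : Type*} [DecidableEq V] (d : ℕ) (φ : V → List Bool) (v v' : V) : ℕ :=
  if v = v' then 0 else wNnode d (φ v) (φ v')

noncomputable def edgeW {V : Type*} (w : V → V → ℝ) : Sym2 V → ℝ :=
  Sym2.lift ⟨fun a b => (w a b + w b a) / 2, fun a b => by ring⟩

noncomputable def treeCost {V : Type*} (w : V → V → ℝ) (E : Finset (Sym2 V)) : ℝ :=
  ∑ e ∈ E, edgeW w e

def Connects {V : Type*} (E : Finset (Sym2 V)) (T : Finset V) : Prop :=
  ∀ u ∈ T, ∀ v ∈ T, (SimpleGraph.fromEdgeSet (E : Set (Sym2 V))).Reachable u v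

def IsSteinerTree {V : Type*} (E : Finset (Sym2 V)) (T : Finset V) : Prop :=
  (∀ e ∈ E, ¬ e.IsDiag) ∧
  (SimpleGraph.fromEdgeSet (E : Set (Sym2 V))).IsAcyclic ∧ Connects E T

lemma lcaDepth_comm : ∀ x y : List Bool, lcaDepth x y = lcaDepth y x
  | [], [] | [], _ :: _ | _ :: _, [] => rfl
  | a :: as, b :: bs => by
    rcases eq_or_ne a b with rfl | h
    · simp [lcaDepth, lcaDepth_comm as bs]
    · simp [lcaDepth, h, Ne.symm h]

lemma lcaDepth_le_length_right : ∀ x y : List Bool, lcaDepth x y ≤ y.length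
  | [], _ | _ :: _, [] => by simp [lcaDepth]
  | a :: as, b :: bs => by
    simp only [lcaDepth, List.length_cons]
    split
    · exact Nat.succ_le_succ (lcaDepth_le_length_right as bs)
    · exact Nat.zero_le _

lemma lcaDepth_self : ∀ x : List Bool, lcaDepth x x = x.length
  | [] => rfl
  | a :: as => by simp [lcaDepth, lcaDepth_self as]

lemma lcaDepth_nil_right (x : List Bool) : lcaDepth x [] = 0 := by
  cases x <;> rfl

lemma lcaDepth_append_left : ∀ (x y t : List Bool), y.length ≤ x.length →
    lcaDepth (x ++ t) y = lcaDepth x y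
  | _, [], _, _ => by rw [lcaDepth_nil_right, lcaDepth_nil_right]
  | [], _ :: _, _, h => by simp at h
  | a :: as, b :: bs, t, h => by
    simp only [List.cons_append, lcaDepth,
      lcaDepth_append_left as bs t (by simpa using h)]

lemma distUp_self (d i : ℕ) : distUp d i i = 0 := by
  simp [distUp]

lemma distUp_pos {d i j : ℕ} (h : j < i) : 0 < distUp d i j :=
  Finset.sum_pos (fun s _ => by unfold levelWeight; split <;> positivity)
    (Finset.nonempty_Icc.mpr h)

lemma wNnode_comm (d : ℕ) (x y : List Bool) : wNnode d x y = wNnode d y x := by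
  unfold wNnode
  rw [lcaDepth_comm y x]
  split_ifs with h1 h2 h2
  · rw [le_antisymm h2 h1]
  · ring
  · ring
  · omega

lemma wNnode_pos {d : ℕ} {x y : List Bool} (h : lcaDepth x y < d) : 0 < wNnode d x y := by
  have := distUp_pos (d := d) h
  unfold wNnode
  split <;> omega

lemma wNnode_eq_add_of_append {d : ℕ} {x y t : List Bool} (ht : (x ++ t).length = d)
    (hyx : y.length ≤ x.length) :
    wNnode d x y = wNnode d (x ++ t) x + wNnode d (x ++ t) y := by
  have hx : lcaDepth (x ++ t) x = x.length := by
    rw [lcaDepth_append_left x x t le_rfl, lcaDepth_self]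
  have hxd : x.length ≤ d := by simp [← ht]
  unfold wNnode
  rw [ht, if_pos hyx, if_pos hxd, if_pos (hyx.trans hxd), hx,
    lcaDepth_append_left x y t hyx, distUp_self, distUp_self]
  ring

lemma wNnode_append_lt {d : ℕ} {x y t : List Bool} (ht : (x ++ t).length = d)
    (hx : x.length < d) (hy : y.length < d) (hyx : y.length ≤ x.length) :
    wNnode d (x ++ t) x < wNnode d x y ∧ wNnode d (x ++ t) y < wNnode d x y := by
  have hxpos : 0 < wNnode d (x ++ t) x := wNnode_pos <| by
    rwa [lcaDepth_append_left x x t le_rfl, lcaDepth_self]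
  have hypos : 0 < wNnode d (x ++ t) y := wNnode_pos <| by
    rw [lcaDepth_append_left x y t hyx]
    exact (lcaDepth_le_length_right x y).trans_lt hy
  rw [wNnode_eq_add_of_append ht hyx]
  omega

lemma edgeW_eq_wNnode {V : Type*} [DecidableEq V] {d : ℕ} {φ : V → List Bool}
    {w : V → V → ℝ} (hw : ∀ v v', w v v' = (wNmetric d φ v v' : ℝ)) {u v : V} (huv : u ≠ v) :
    edgeW w s(u, v) = wNnode d (φ u) (φ v) := by
  simp only [edgeW, Sym2.lift_mk, hw, wNmetric, if_neg huv, if_neg huv.symm,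
    wNnode_comm d (φ v)]
  ring

namespace SimpleGraph

variable {V : Type*} {G : SimpleGraph V}

lemma Reachable.deleteEdges_or {u x : V} (a b : V) (h : G.Reachable u x) :
    (G.deleteEdges {s(a, b)}).Reachable u x ∨ (G.deleteEdges {s(a, b)}).Reachable u a ∨
      (G.deleteEdges {s(a, b)}).Reachable u b := by
  obtain ⟨p⟩ := h
  induction p with
  | nil => exact Or.inl .rfl
  | @cons u w x hadj q ih =>
    by_cases he : s(u, w) = s(a, b)
    · rcases Sym2.eq_iff.mp he with ⟨rfl, -⟩ | ⟨rfl, -⟩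
      · exact Or.inr (Or.inl .rfl)
      · exact Or.inr (Or.inr .rfl)
    · have hH : (G.deleteEdges {s(a, b)}).Adj u w := deleteEdges_adj.mpr ⟨hadj, he⟩
      exact ih.imp hH.reachable.trans (Or.imp hH.reachable.trans hH.reachable.trans)

lemma fromEdgeSet_coe_erase [DecidableEq V] (E : Finset (Sym2 V)) (e : Sym2 V) :
    fromEdgeSet ((E.erase e : Finset (Sym2 V)) : Set (Sym2 V)) =
      (fromEdgeSet (E : Set (Sym2 V))).deleteEdges {e} := by
  rw [deleteEdges_fromEdgeSet, Finset.coe_erase]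

lemma fromEdgeSet_coe_insert [DecidableEq V] (E : Finset (Sym2 V)) (u v : V) :
    fromEdgeSet ((insert s(u, v) E : Finset (Sym2 V)) : Set (Sym2 V)) =
      fromEdgeSet (E : Set (Sym2 V)) ⊔ edge u v := by
  rw [Finset.coe_insert, Set.insert_eq, fromEdgeSet_union, sup_comm, edge]

end SimpleGraph

section Steiner

open SimpleGraph

variable {V : Type*} {E : Finset (Sym2 V)} {T : Finset V} {a b v : V}

lemma Connects.of_forall_reachable
    (h : ∀ t ∈ T, (fromEdgeSet (E : Set (Sym2 V))).Reachable t v) : Connects E T :=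
  fun t ht t' ht' => (h t ht).trans (h t' ht').symm

lemma IsSteinerTree.adj_of_mem (hE : IsSteinerTree E T) (he : s(a, b) ∈ E) :
    (fromEdgeSet (E : Set (Sym2 V))).Adj a b :=
  (fromEdgeSet_adj _).mpr ⟨he, fun h => hE.1 _ he (Sym2.mk_isDiag_iff.mpr h)⟩

variable [DecidableEq V]

lemma IsSteinerTree.erase_of_not_reachable (hE : IsSteinerTree E T) (he : s(a, b) ∈ E)
    (hv : v ∈ T) (hva : ¬ (fromEdgeSet (E : Set (Sym2 V))).Reachable v a) :
    IsSteinerTree (E.erase s(a, b)) T := by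
  have hab := hE.adj_of_mem he
  obtain ⟨hdiag, hacyc, hconn⟩ := hE
  set G := fromEdgeSet (E : Set (Sym2 V))
  refine ⟨fun f hf => hdiag f (Finset.mem_of_mem_erase hf),
    hacyc.anti (fromEdgeSet_mono (Finset.coe_subset.mpr (Finset.erase_subset _ _))),
    Connects.of_forall_reachable (v := v) fun t ht => ?_⟩
  rw [fromEdgeSet_coe_erase]
  have htv : G.Reachable t v := hconn t ht v hv
  rcases htv.deleteEdges_or a b with h | h | h
  · exact h
  · exact absurd (htv.symm.trans (h.mono (deleteEdges_le _))) hva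
  · exact absurd ((htv.symm.trans (h.mono (deleteEdges_le _))).trans hab.reachable.symm) hva

lemma IsSteinerTree.insert_erase_of_reachable (hE : IsSteinerTree E T) (he : s(a, b) ∈ E)
    (hv : v ∈ T) (hvb : v ≠ b)
    (hva : (fromEdgeSet ((E.erase s(a, b) : Finset (Sym2 V)) : Set (Sym2 V))).Reachable v a) :
    s(v, b) ∉ E.erase s(a, b) ∧ IsSteinerTree (insert s(v, b) (E.erase s(a, b))) T := by
  have hab := hE.adj_of_mem he
  obtain ⟨hdiag, hacyc, hconn⟩ := hE
  set G := fromEdgeSet (E : Set (Sym2 V))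
  set H := fromEdgeSet ((E.erase s(a, b) : Finset (Sym2 V)) : Set (Sym2 V)) with hH
  rw [fromEdgeSet_coe_erase] at hH
  have hHG : H ≤ G := by rw [hH]; exact deleteEdges_le _
  have hbridge : ¬ H.Reachable a b := hH ▸ isAcyclic_iff_forall_adj_isBridge.mp hacyc hab
  have hvb' : ¬ H.Reachable v b := fun h => hbridge (hva.symm.trans h)
  have hnew : (H ⊔ edge v b).Reachable v b :=
    (Adj.reachable (by simp [edge_adj, hvb])).mono le_sup_right
  refine ⟨fun hmem => hvb' ((fromEdgeSet_adj _).mpr ⟨hmem, hvb⟩).reachable, ?_, ?_, ?_⟩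
  · intro f hf
    rcases Finset.mem_insert.mp hf with rfl | hf
    · simpa using hvb
    · exact hdiag f (Finset.mem_of_mem_erase hf)
  · rw [fromEdgeSet_coe_insert]
    exact (hacyc.anti hHG).sup_edge_of_not_reachable hvb'
  · refine Connects.of_forall_reachable (v := v) fun t ht => ?_
    rw [fromEdgeSet_coe_insert]
    have hta : G.Reachable t a := (hconn t ht v hv).trans (hva.mono hHG)
    rcases (hta.deleteEdges_or a b).elim Or.inl id with h | h <;> rw [← hH] at h
    · exact (h.trans hva.symm).mono le_sup_left
    · exact (h.mono le_sup_left).trans hnew.symm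

lemma treeCost_erase (w : V → V → ℝ) {e : Sym2 V} (he : e ∈ E) :
    treeCost w (E.erase e) = treeCost w E - edgeW w e :=
  Finset.sum_erase_eq_sub he

lemma treeCost_insert_erase (w : V → V → ℝ) {e f : Sym2 V} (he : e ∈ E)
    (hf : f ∉ E.erase e) :
    treeCost w (insert f (E.erase e)) = treeCost w E - edgeW w e + edgeW w f := by
  rw [treeCost, Finset.sum_insert hf, ← treeCost, treeCost_erase w he]
  ring

/-- The cheaper tree drops `ab` and, unless that disconnects terminals, adds `va` or `vb`. -/
theorem IsSteinerTree.exists_treeCost_lt (w : V → V → ℝ) (hE : IsSteinerTree E T)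
    (he : s(a, b) ∈ E) (hv : v ∈ T) (hva : v ≠ a) (hvb : v ≠ b) (hpos : 0 < edgeW w s(a, b))
    (hwa : edgeW w s(v, a) < edgeW w s(a, b)) (hwb : edgeW w s(v, b) < edgeW w s(a, b)) :
    ∃ E', IsSteinerTree E' T ∧ treeCost w E' < treeCost w E := by
  by_cases hG : (fromEdgeSet (E : Set (Sym2 V))).Reachable v a
  · rcases (hG.deleteEdges_or a b).elim Or.inl id with h | h <;>
      rw [← fromEdgeSet_coe_erase] at h
    · obtain ⟨hf, hE'⟩ := hE.insert_erase_of_reachable he hv hvb h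
      exact ⟨_, hE', by rw [treeCost_insert_erase w he hf]; linarith⟩
    · rw [Sym2.eq_swap] at he h
      obtain ⟨hf, hE'⟩ := hE.insert_erase_of_reachable he hv hva h
      rw [Sym2.eq_swap (a := b)] at hf hE' he
      exact ⟨_, hE', by rw [treeCost_insert_erase w he hf]; linarith⟩
  · exact ⟨_, hE.erase_of_not_reachable he hv hG, by rw [treeCost_erase w he]; linarith⟩

end Steiner

open Classical in
theorem stmt15_general {V : Type*} [Fintype V] [DecidableEq V] (d : ℕ)
    (φ : V → List Bool)
    (hlen : ∀ v, (φ v).length ≤ d)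
    (hsurj : ∀ l : List Bool, l.length ≤ d → ∃ v, φ v = l)
    (T : Finset V) (hT : T = Finset.univ.filter (fun v => (φ v).length = d))
    (w : V → V → ℝ) (hw : ∀ v v', w v v' = (wNmetric d φ v v' : ℝ))
    (E : Finset (Sym2 V)) (hE : IsSteinerTree E T)
    (hopt : ∀ E' : Finset (Sym2 V), IsSteinerTree E' T → treeCost w E ≤ treeCost w E') :
    ∀ e ∈ E, ∃ v, v ∈ e ∧ v ∈ T := by
  have hshort : ∀ v, v ∉ T → (φ v).length < d := fun v hv =>
    (hlen v).lt_of_ne fun h => hv (by simp [hT, h])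
  intro e he
  induction e using Sym2.ind with | _ a b => ?_
  by_contra! hab
  wlog hba : (φ b).length ≤ (φ a).length generalizing a b
  · exact this b a (Sym2.eq_swap ▸ he) (by simpa [or_comm] using hab) (by omega)
  have ha := hshort a (hab a (Sym2.mem_mk_left a b))
  have hb := hshort b (hab b (Sym2.mem_mk_right a b))
  obtain ⟨v, hv⟩ := hsurj (φ a ++ List.replicate (d - (φ a).length) false) (by simp; omega)
  have hvd : (φ v).length = d := by simp [hv]; omega
  have hvT : v ∈ T := by simp [hT, hvd]
  have hva : v ≠ a := by rintro rfl; omega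
  have hvb : v ≠ b := by rintro rfl; omega
  have hne : a ≠ b := (hE.adj_of_mem he).ne
  obtain ⟨hlta, hltb⟩ := wNnode_append_lt (hv ▸ hvd) ha hb hba
  rw [← hv] at hlta hltb
  obtain ⟨E', hE', hlt⟩ := hE.exists_treeCost_lt w he hvT hva hvb
    (by rw [edgeW_eq_wNnode hw hne]; exact_mod_cast (Nat.zero_le _).trans_lt hlta)
    (by rw [edgeW_eq_wNnode hw hne, edgeW_eq_wNnode hw hva]; exact_mod_cast hlta)
    (by rw [edgeW_eq_wNnode hw hne, edgeW_eq_wNnode hw hvb]; exact_mod_cast hltb)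
  exact (hopt E' hE').not_gt hlt

open Classical in
theorem stmt15 {V : Type*} [Fintype V] [DecidableEq V] (d : ℕ) (hd : 1 ≤ d)
    (φ : V → List Bool) (hinj : Function.Injective φ)
    (hlen : ∀ v, (φ v).length ≤ d)
    (hsurj : ∀ l : List Bool, l.length ≤ d → ∃ v, φ v = l)
    (T : Finset V) (hT : T = Finset.univ.filter (fun v => (φ v).length = d))
    (w : V → V → ℝ) (hw : ∀ v v', w v v' = (wNmetric d φ v v' : ℝ))
    (E : Finset (Sym2 V)) (hE : IsSteinerTree E T)
    (hopt : ∀ E' : Finset (Sym2 V), IsSteinerTree E' T → treeCost w E ≤ treeCost w E') :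
    ∀ e ∈ E, ∃ v, v ∈ e ∧ v ∈ T :=
  stmt15_general d φ hlen hsurj T hT w hw E hE hopt
end

section
/- Let $(V, T, w_N)$ be a metric Steiner tree instance in which for every pair of distinct Steiner vertices $v, v'$ lying in the same group $V_x$, every other vertex $u$ satisfies $w_N(u, v) = w_N(u, v')$. Then there exists an optimal Steiner tree $\tau$ such that for each group $V_x$, $|V(\tau) \cap V_x| \le 1$. -/
open Finset SimpleGraph

section Cost

variable {V : Type*} {w : V → V → ℝ}

@[simp]
lemma edgeW_mk (a b : V) : edgeW w s(a, b) = (w a b + w b a) / 2 := rfl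

lemma edgeW_nonneg (hnn : ∀ a b, 0 ≤ w a b) (e : Sym2 V) : 0 ≤ edgeW w e := by
  induction e using Sym2.ind with
  | _ a b => exact div_nonneg (add_nonneg (hnn a b) (hnn b a)) zero_le_two

lemma edgeW_map_le {f : V → V} (hf : ∀ a b, w (f a) (f b) ≤ w a b) (e : Sym2 V) :
    edgeW w (e.map f) ≤ edgeW w e := by
  induction e using Sym2.ind with
  | _ a b => simp only [Sym2.map_mk, edgeW_mk]; linarith [hf a b, hf b a]

lemma treeCost_mono (hnn : ∀ a b, 0 ≤ w a b) {E E' : Finset (Sym2 V)} (h : E ⊆ E') :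
    treeCost w E ≤ treeCost w E' :=
  sum_le_sum_of_subset_of_nonneg h fun e _ _ => edgeW_nonneg hnn e

end Cost

section MapEdges

variable {V W : Type*} [DecidableEq V] [DecidableEq W]

def edgeVerts (E : Finset (Sym2 V)) : Finset V := E.biUnion Sym2.toFinset

lemma mem_edgeVerts {E : Finset (Sym2 V)} {v : V} : v ∈ edgeVerts E ↔ ∃ e ∈ E, v ∈ e := by
  simp [edgeVerts, Sym2.mem_toFinset]

lemma edgeVerts_mono {E E' : Finset (Sym2 V)} (h : E ⊆ E') : edgeVerts E ⊆ edgeVerts E' :=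
  biUnion_subset_biUnion_of_subset_left _ h

def mapEdges (f : V → W) (E : Finset (Sym2 V)) : Finset (Sym2 W) :=
  (E.image (Sym2.map f)).filter fun e => ¬ e.IsDiag

lemma edgeVerts_mapEdges_subset (f : V → W) (E : Finset (Sym2 V)) :
    edgeVerts (mapEdges f E) ⊆ (edgeVerts E).image f := by
  intro x hx
  obtain ⟨e, he, hxe⟩ := mem_edgeVerts.mp hx
  obtain ⟨⟨d, hd, rfl⟩, -⟩ := mem_filter.mp he |>.imp_left mem_image.mp
  obtain ⟨a, ha, rfl⟩ := Sym2.mem_map.mp hxe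
  exact mem_image_of_mem f (mem_edgeVerts.mpr ⟨d, hd, ha⟩)

lemma treeCost_mapEdges_le {w : V → V → ℝ} (hnn : ∀ a b, 0 ≤ w a b) {f : V → V}
    (hf : ∀ a b, w (f a) (f b) ≤ w a b) (E : Finset (Sym2 V)) :
    treeCost w (mapEdges f E) ≤ treeCost w E :=
  calc treeCost w (mapEdges f E) ≤ treeCost w (E.image (Sym2.map f)) :=
        treeCost_mono hnn (filter_subset _ _)
    _ ≤ ∑ e ∈ E, edgeW w (e.map f) := sum_image_le_of_nonneg fun e _ => edgeW_nonneg hnn e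
    _ ≤ treeCost w E := sum_le_sum fun e _ => edgeW_map_le hf e

end MapEdges

section Reachability

variable {V W : Type*}

lemma SimpleGraph.Reachable.lift {G : SimpleGraph V} {H : SimpleGraph W} (f : V → W)
    (h : ∀ a b, G.Adj a b → H.Reachable (f a) (f b)) {u v : V} (huv : G.Reachable u v) :
    H.Reachable (f u) (f v) := by
  rw [reachable_iff_reflTransGen] at huv ⊢
  exact Relation.ReflTransGen.lift' f (fun a b hab => (reachable_iff_reflTransGen _ _).mp
    (h a b hab)) _ _ huv

variable [DecidableEq W]

lemma reachable_mapEdges (f : V → W) {E : Finset (Sym2 V)} {u v : V}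
    (huv : (fromEdgeSet (E : Set (Sym2 V))).Reachable u v) :
    (fromEdgeSet (mapEdges f E : Set (Sym2 W))).Reachable (f u) (f v) := by
  refine huv.lift f fun a b hab => ?_
  by_cases hf : f a = f b
  · rw [hf]
  · exact Adj.reachable ⟨mem_filter.mpr ⟨mem_image_of_mem _ hab.1, by simpa using hf⟩, hf⟩

variable [DecidableEq V]

lemma Connects.mapEdges {E : Finset (Sym2 V)} {T : Finset V} (hE : Connects E T) {f : V → V}
    (hf : ∀ t ∈ T, f t = t) : Connects (mapEdges f E) T := by
  intro u hu v hv
  simpa only [hf u hu, hf v hv] using reachable_mapEdges f (hE u hu v hv)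

lemma Connects.erase_of_not_isBridge {E : Finset (Sym2 V)} {T : Finset V} (hE : Connects E T)
    {x y : V} (hxy : ¬ (fromEdgeSet (E : Set (Sym2 V))).IsBridge s(x, y)) :
    Connects (E.erase s(x, y)) T := by
  rw [isBridge_iff, not_not] at hxy
  have hG : fromEdgeSet (E.erase s(x, y) : Set (Sym2 V)) =
      (fromEdgeSet (E : Set (Sym2 V))).deleteEdges {s(x, y)} := by
    rw [deleteEdges_fromEdgeSet, coe_erase]
  intro u hu v hv
  rw [hG]
  refine (hE u hu v hv).lift id fun a b hab => ?_
  by_cases he : s(a, b) = s(x, y)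
  · rcases Sym2.eq_iff.mp he with ⟨rfl, rfl⟩ | ⟨rfl, rfl⟩
    exacts [hxy, hxy.symm]
  · exact Adj.reachable (by simpa [he] using hab)

end Reachability

def IsOptimalSteinerTree {V : Type*} (w : V → V → ℝ) (E : Finset (Sym2 V)) (T : Finset V) :
    Prop :=
  IsSteinerTree E T ∧ ∀ E', IsSteinerTree E' T → treeCost w E ≤ treeCost w E'

section SteinerTree

variable {V : Type*} [DecidableEq V]

lemma exists_isSteinerTree_subset {E : Finset (Sym2 V)} {T : Finset V}
    (hd : ∀ e ∈ E, ¬ e.IsDiag) (hc : Connects E T) : ∃ E' ⊆ E, IsSteinerTree E' T := by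
  classical
  obtain ⟨E', hE', hmin⟩ := exists_min_image ((E.powerset).filter (Connects · T)) card
    ⟨E, mem_filter.mpr ⟨mem_powerset_self E, hc⟩⟩
  obtain ⟨hsub, hE'c⟩ := mem_filter.mp hE' |>.imp_left mem_powerset.mp
  refine ⟨E', hsub, fun e he => hd e (hsub he), ?_, hE'c⟩
  -- a non-bridge edge could be removed, contradicting the minimality of `E'`
  rw [isAcyclic_iff_forall_adj_isBridge]
  by_contra! ⟨x, y, hxy, hbr⟩
  have hmem : s(x, y) ∈ E' := hxy.1
  have := hmin (E'.erase s(x, y)) (mem_filter.mpr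
    ⟨mem_powerset.mpr ((erase_subset _ _).trans hsub), hE'c.erase_of_not_isBridge hbr⟩)
  exact this.not_gt (card_erase_lt_of_mem hmem)

variable [Fintype V]

lemma exists_isSteinerTree (T : Finset V) : ∃ E, IsSteinerTree E T := by
  have hc : Connects (univ.filter fun e : Sym2 V => ¬ e.IsDiag) T := by
    intro u _ v _
    by_cases huv : u = v
    · rw [huv]
    · exact Adj.reachable ⟨by simpa using huv, huv⟩
  obtain ⟨E, -, hE⟩ := exists_isSteinerTree_subset (fun e he => (mem_filter.mp he).2) hc
  exact ⟨E, hE⟩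

lemma exists_isOptimalSteinerTree (w : V → V → ℝ) (T : Finset V) :
    ∃ E, IsOptimalSteinerTree w E T := by
  classical
  obtain ⟨E, hE, hmin⟩ := exists_min_image (univ.filter (IsSteinerTree · T)) (treeCost w)
    ((exists_isSteinerTree T).imp fun E hE => mem_filter.mpr ⟨mem_univ E, hE⟩)
  exact ⟨E, (mem_filter.mp hE).2, fun E' hE' => hmin E' (mem_filter.mpr ⟨mem_univ E', hE'⟩)⟩

end SteinerTree

section Merge

variable {V : Type*} [DecidableEq V] {w : V → V → ℝ} {v v' : V}

lemma merge_contraction (hsymm : ∀ a b, w a b = w b a) (h0 : ∀ a, w a a = 0)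
    (hnn : ∀ a b, 0 ≤ w a b) (hvv' : ∀ u, u ≠ v → u ≠ v' → w u v = w u v') (a b : V) :
    w (Function.update id v' v a) (Function.update id v' v b) ≤ w a b := by
  have key : ∀ u, u ≠ v' → w u v ≤ w u v' := by
    intro u hu
    by_cases huv : u = v
    · rw [huv, h0]; exact hnn v v'
    · exact (hvv' u huv hu).le
  rcases eq_or_ne a v' with ha | ha <;> rcases eq_or_ne b v' with hb | hb
  · simp [ha, hb, h0]
  · simpa [ha, hb, hsymm _ b] using key b hb
  · simpa [ha, hb] using key a ha
  · simp [ha, hb]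

lemma exists_isSteinerTree_merge (hsymm : ∀ a b, w a b = w b a) (h0 : ∀ a, w a a = 0)
    (hnn : ∀ a b, 0 ≤ w a b) {T : Finset V} (hv'T : v' ∉ T)
    (hvv' : ∀ u, u ≠ v → u ≠ v' → w u v = w u v') (hne : v ≠ v')
    {E : Finset (Sym2 V)} (hE : IsSteinerTree E T) (hv : v ∈ edgeVerts E)
    (hv' : v' ∈ edgeVerts E) :
    ∃ E', IsSteinerTree E' T ∧ treeCost w E' ≤ treeCost w E ∧
      #(edgeVerts E') < #(edgeVerts E) := by
  set f := Function.update id v' v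
  have hfT : ∀ t ∈ T, f t = t := fun t ht =>
    Function.update_of_ne (by rintro rfl; exact hv'T ht) _ _
  obtain ⟨E', hsub, hE'⟩ := exists_isSteinerTree_subset (fun _ he => (mem_filter.mp he).2)
    (hE.2.2.mapEdges hfT)
  refine ⟨E', hE', ?_, ?_⟩
  · calc treeCost w E' ≤ treeCost w (mapEdges f E) := treeCost_mono hnn hsub
      _ ≤ treeCost w E := treeCost_mapEdges_le hnn (merge_contraction hsymm h0 hnn hvv') E
  · have hnotInj : ¬ Set.InjOn f (edgeVerts E) := fun hinj =>
      hne (hinj hv hv' (by simp [f, hne]))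
    calc #(edgeVerts E') ≤ #((edgeVerts E).image f) :=
          card_le_card ((edgeVerts_mono hsub).trans (edgeVerts_mapEdges_subset f E))
      _ < #(edgeVerts E) := card_image_le.lt_of_ne (mt card_image_iff.mp hnotInj)

end Merge

open Classical in
theorem stmt16_general {V ι : Type*} [Fintype V] [DecidableEq V] [DecidableEq ι]
    (w : V → V → ℝ) (hsymm : ∀ a b, w a b = w b a) (h0 : ∀ a, w a a = 0)
    (hnn : ∀ a b, 0 ≤ w a b)
    (T : Finset V) (grp : V → ι)
    (hind : ∀ v v' : V, v ≠ v' → grp v = grp v' →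
      ∀ u : V, u ≠ v → u ≠ v' → w u v = w u v')
    (hsteiner : ∀ v v' : V, v ≠ v' → grp v = grp v' → v ∉ T) :
    ∃ E : Finset (Sym2 V), IsSteinerTree E T ∧
      (∀ E' : Finset (Sym2 V), IsSteinerTree E' T → treeCost w E ≤ treeCost w E') ∧
      ∀ i : ι,
        (Finset.univ.filter (fun v => grp v = i ∧ ∃ e ∈ E, v ∈ e)).card ≤ 1 := by
  obtain ⟨E, hE, hmin⟩ := exists_min_image (univ.filter (IsOptimalSteinerTree w · T))
    (fun E => #(edgeVerts E)) ((exists_isOptimalSteinerTree w T).imp fun E hE =>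
      mem_filter.mpr ⟨mem_univ E, hE⟩)
  obtain ⟨hE, hopt⟩ := (mem_filter.mp hE).2
  refine ⟨E, hE, hopt, fun i => card_le_one.mpr fun v hv v' hv' => ?_⟩
  by_contra hne
  simp only [mem_filter, mem_univ, true_and, ← mem_edgeVerts] at hv hv'
  have hg : grp v = grp v' := hv.1.trans hv'.1.symm
  obtain ⟨E', hE', hcost, hlt⟩ := exists_isSteinerTree_merge hsymm h0 hnn
    (hsteiner v' v (Ne.symm hne) hg.symm) (hind v v' hne hg) hne hE hv.2 hv'.2
  have hE'opt : IsOptimalSteinerTree w E' T := ⟨hE', fun E'' h => hcost.trans (hopt E'' h)⟩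
  exact (hmin E' (mem_filter.mpr ⟨mem_univ E', hE'opt⟩)).not_gt hlt

open Classical in
theorem stmt16 {V ι : Type*} [Fintype V] [DecidableEq V] [DecidableEq ι]
    (w : V → V → ℝ) (hsymm : ∀ a b, w a b = w b a) (h0 : ∀ a, w a a = 0)
    (hnn : ∀ a b, 0 ≤ w a b) (htri : ∀ a b c, w a c ≤ w a b + w b c)
    (T : Finset V) (grp : V → ι)
    (hind : ∀ v v' : V, v ≠ v' → grp v = grp v' →
      ∀ u : V, u ≠ v → u ≠ v' → w u v = w u v')
    (hsteiner : ∀ v v' : V, v ≠ v' → grp v = grp v' → v ∉ T) :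
    ∃ E : Finset (Sym2 V), IsSteinerTree E T ∧
      (∀ E' : Finset (Sym2 V), IsSteinerTree E' T → treeCost w E ≤ treeCost w E') ∧
      ∀ i : ι,
        (Finset.univ.filter (fun v => grp v = i ∧ ∃ e ∈ E, v ∈ e)).card ≤ 1 :=
  stmt16_general w hsymm h0 hnn T grp hind hsteiner
end
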